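/- Let G have n ≥ 2 vertices, arboricity at most λ, and let d > 2λ. Then the number ℓ of nonempty layers in the H-partition produced by the greedy peeling algorithm satisfies ℓ ≤ 1 + log n / log(d/(2λ)), i.e., ℓ = O(log n / log(d/λ)). -/

import Mathlib

def HasArboricityAtMost {V : Type*} (G : SimpleGraph V) (lam : ℕ) : Prop :=
  ∃ F : Fin lam → SimpleGraph V,
    (∀ i, (F i).IsAcyclic) ∧ (∀ i, F i ≤ G) ∧
    (∀ e ∈ G.edgeSet, ∃! i, e ∈ (F i).edgeSet)

/-- The greedy peeling process: `peel G d ℓ = ∅` means the H-partition has at most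
`ℓ` (nonempty) layers. -/
def peel {V : Type*} [Fintype V] [DecidableEq V] (G : SimpleGraph V)
    [DecidableRel G.Adj] (d : ℕ) : ℕ → Finset V
  | 0 => Finset.univ
  | i + 1 => (peel G d i).filter (fun v => d < (G.neighborFinset v ∩ peel G d i).card)

/-! Write `P i = peel G d i` for the vertices still present after `i` rounds. Every vertex of
`P (i + 1)` has more than `d` neighbours in `P i`, whereas each of the `λ` forests covering `G`
has at most `|S|` edges inside any vertex set `S`. Double counting the edges inside `P i` gives
`d |P (i + 1)| ≤ 2λ |P i|`, hence `|P i| ≤ n (2λ/d)^i`, which drops below `1` as soon as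
`i > log n / log (d / 2λ)`. -/

open Finset

namespace SimpleGraph

variable {V : Type*} [Fintype V] {F : SimpleGraph V}

theorem IsAcyclic.card_edgeFinset_le [DecidableRel F.Adj] (hF : F.IsAcyclic) :
    #F.edgeFinset ≤ Fintype.card V := by
  cases isEmpty_or_nonempty V
  · simp [Subsingleton.elim F ⊥]
  · obtain ⟨T, hFT, -, hT⟩ := connected_top.exists_isTree_le_of_le_of_isAcyclic le_top hF
    classical
    have := hT.card_edgeFinset
    have := card_le_card (edgeFinset_mono hFT)
    omega

theorem IsAcyclic.sum_card_neighborFinset_inter_le [DecidableEq V] [DecidableRel F.Adj]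
    (hF : F.IsAcyclic) (S : Finset V) :
    ∑ v ∈ S, #(F.neighborFinset v ∩ S) ≤ 2 * #S := by
  calc ∑ v ∈ S, #(F.neighborFinset v ∩ S)
      = ∑ v : (S : Set V), (F.induce S).degree v := by
        rw [← sum_coe_sort S]
        refine sum_congr rfl fun v _ => ?_
        rw [← card_neighborFinset_eq_degree, ← card_map (.subtype (· ∈ (S : Set V)))]
        congr 1
        ext w
        simp [and_comm]
    _ = 2 * #(F.induce S).edgeFinset := sum_degrees_eq_twice_card_edges _
    _ ≤ 2 * #S := by
        have := (hF.induce S).card_edgeFinset_le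
        simp only [SetLike.coe_sort_coe, Fintype.card_coe] at this
        omega

end SimpleGraph

section Peeling

variable {V : Type*} [Fintype V] [DecidableEq V] {G : SimpleGraph V} [DecidableRel G.Adj]
  {lam : ℕ}

theorem HasArboricityAtMost.sum_card_neighborFinset_inter_le (harb : HasArboricityAtMost G lam)
    (S : Finset V) : ∑ v ∈ S, #(G.neighborFinset v ∩ S) ≤ 2 * lam * #S := by
  classical
  obtain ⟨F, hF, -, hcover⟩ := harb
  have hsplit (v : V) : #(G.neighborFinset v ∩ S) ≤ ∑ i, #((F i).neighborFinset v ∩ S) := by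
    refine (card_le_card fun w hw => ?_).trans card_biUnion_le
    obtain ⟨hvw, hwS⟩ := mem_inter.mp hw
    obtain ⟨i, hi, -⟩ := hcover s(v, w) ((G.mem_neighborFinset v w).mp hvw)
    exact mem_biUnion.mpr
      ⟨i, mem_univ i, mem_inter.mpr ⟨(F i).mem_neighborFinset v w |>.mpr hi, hwS⟩⟩
  calc ∑ v ∈ S, #(G.neighborFinset v ∩ S)
      ≤ ∑ v ∈ S, ∑ i, #((F i).neighborFinset v ∩ S) := sum_le_sum fun v _ => hsplit v
    _ = ∑ i, ∑ v ∈ S, #((F i).neighborFinset v ∩ S) := sum_comm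
    _ ≤ ∑ _i : Fin lam, 2 * #S :=
        sum_le_sum fun i _ => (hF i).sum_card_neighborFinset_inter_le S
    _ = 2 * lam * #S := by simp only [sum_const, card_univ, Fintype.card_fin, smul_eq_mul]; ring

theorem peel_succ_subset (d i : ℕ) : peel G d (i + 1) ⊆ peel G d i := filter_subset _ _

theorem mul_card_peel_succ_le (harb : HasArboricityAtMost G lam) (d i : ℕ) :
    d * #(peel G d (i + 1)) ≤ 2 * lam * #(peel G d i) :=
  calc d * #(peel G d (i + 1))
      ≤ ∑ v ∈ peel G d (i + 1), #(G.neighborFinset v ∩ peel G d i) := by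
        rw [mul_comm, ← smul_eq_mul, ← sum_const]
        exact sum_le_sum fun v hv => (mem_filter.mp hv).2.le
    _ ≤ ∑ v ∈ peel G d i, #(G.neighborFinset v ∩ peel G d i) :=
        sum_le_sum_of_subset (peel_succ_subset d i)
    _ ≤ 2 * lam * #(peel G d i) := harb.sum_card_neighborFinset_inter_le _

theorem card_peel_mul_pow_le (harb : HasArboricityAtMost G lam) (d : ℕ) :
    ∀ i, #(peel G d i) * d ^ i ≤ Fintype.card V * (2 * lam) ^ i
  | 0 => by simp [peel]
  | i + 1 =>
    calc #(peel G d (i + 1)) * d ^ (i + 1) = d * #(peel G d (i + 1)) * d ^ i := by ring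
      _ ≤ 2 * lam * #(peel G d i) * d ^ i :=
          Nat.mul_le_mul_right _ (mul_card_peel_succ_le harb d i)
      _ = 2 * lam * (#(peel G d i) * d ^ i) := by ring
      _ ≤ 2 * lam * (Fintype.card V * (2 * lam) ^ i) :=
          Nat.mul_le_mul_left _ (card_peel_mul_pow_le harb d i)
      _ = Fintype.card V * (2 * lam) ^ (i + 1) := by ring

theorem peel_eq_empty_of_lt (harb : HasArboricityAtMost G lam) {d ℓ : ℕ}
    (h : Fintype.card V * (2 * lam) ^ ℓ < d ^ ℓ) : peel G d ℓ = ∅ := by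
  have := card_peel_mul_pow_le harb d ℓ
  have : #(peel G d ℓ) < 1 := by
    by_contra! hne
    exact (h.trans_le (le_mul_of_one_le_left' hne)).not_ge this
  simpa using this

end Peeling

theorem Real.lt_pow_floor_log_div_log_add_one {r : ℝ} (hr : 1 < r) (x : ℝ) :
    x < r ^ (⌊Real.log x / Real.log r⌋₊ + 1) := by
  set ℓ := ⌊Real.log x / Real.log r⌋₊ + 1
  have hlog : Real.log x < ℓ * Real.log r := by
    rw [← div_lt_iff₀ (Real.log_pos hr)]
    exact_mod_cast Nat.lt_floor_add_one _
  calc x < Real.exp (ℓ * Real.log r) := Real.lt_exp_of_log_lt hlog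
    _ = r ^ ℓ := by rw [Real.exp_nat_mul, Real.exp_log (zero_lt_one.trans hr)]

theorem H_partition_number_of_layers_general {V : Type*} [Fintype V] [DecidableEq V]
    (G : SimpleGraph V) [DecidableRel G.Adj] (n lam d : ℕ)
    (hn : n = Fintype.card V) (hlam : 1 ≤ lam)
    (harb : HasArboricityAtMost G lam) (hd : 2 * lam < d) :
    ∃ ℓ : ℕ, peel G d ℓ = ∅ ∧
      (ℓ : ℝ) ≤ 1 + Real.log n / Real.log ((d : ℝ) / (2 * lam)) := by
  set r : ℝ := (d : ℝ) / (2 * lam) with hr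
  have hlam0 : (0 : ℝ) < 2 * lam := mul_pos two_pos (Nat.cast_pos.mpr hlam)
  have hr1 : 1 < r := by rw [hr, one_lt_div hlam0]; exact_mod_cast hd
  set ℓ := ⌊Real.log n / Real.log r⌋₊ + 1
  have hnr : (n : ℝ) < r ^ ℓ := Real.lt_pow_floor_log_div_log_add_one hr1 n
  refine ⟨ℓ, peel_eq_empty_of_lt harb ?_, ?_⟩
  · rw [hr, div_pow, lt_div_iff₀ (pow_pos hlam0 ℓ)] at hnr
    rw [← hn]
    exact_mod_cast hnr
  · have := Nat.floor_le (div_nonneg (Real.log_natCast_nonneg n) (Real.log_pos hr1).le)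
    push_cast [ℓ]
    linarith

/-- for a graph on `n ≥ 2` vertices with arboricity at most `lam` and
`d > 2 * lam`, the number `ℓ` of nonempty layers of the H-partition produced by the
greedy peeling algorithm satisfies `ℓ ≤ 1 + log n / log (d / (2 * lam))`. -/
theorem H_partition_number_of_layers {V : Type*} [Fintype V] [DecidableEq V]
    (G : SimpleGraph V) [DecidableRel G.Adj] (n lam d : ℕ)
    (hn : n = Fintype.card V) (h2n : 2 ≤ n) (hlam : 1 ≤ lam)
    (harb : HasArboricityAtMost G lam) (hd : 2 * lam < d) :
    ∃ ℓ : ℕ, peel G d ℓ = ∅ ∧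
      (ℓ : ℝ) ≤ 1 + Real.log n / Real.log ((d : ℝ) / (2 * lam)) :=
  H_partition_number_of_layers_general G n lam d hn hlam harb hd
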